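/- arXiv:1408.5003 — 6 statements merged into one kernel-verified Lean document; each statement's English description precedes it below -/
import Mathlib

section
/- The p-adic gamma function satisfies the reflection formula Γ_p(x)·Γ_p(1−x) = (−1)^{x_0} for all x ∈ ℤ_p, where x_0 ∈ {1, 2, …, p} is the unique element of that set congruent to x modulo p. -/
/-- Reflection formula for Morita's `p`-adic gamma function: if `G : ℤ_p → ℤ_p` is the
continuous function satisfying `G n = (-1)^n ∏_{0<j<n, p∤j} j` for natural numbers `n`
(Morita's `Γ_p`), then `Γ_p(x) Γ_p(1-x) = (-1)^{x₀}`, where `x₀ ∈ {1, …, p}` is congruent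
to `x` modulo `p`. -/
theorem stmt7 (p : ℕ) [hpf : Fact p.Prime] (hodd : Odd p)
    (G : ℤ_[p] → ℤ_[p]) (hcont : Continuous G)
    (hG : ∀ n : ℕ, G n = (-1) ^ n *
      ∏ j ∈ (Finset.Ico 1 n).filter (fun j => ¬ p ∣ j), (j : ℤ_[p]))
    (x : ℤ_[p]) (x0 : ℕ) (hx0 : 1 ≤ x0) (hx0' : x0 ≤ p)
    (hx : ∃ y : ℤ_[p], x - (x0 : ℤ_[p]) = p * y) :
    G x * G (1 - x) = (-1) ^ x0 := by
  obtain ⟨y, hy⟩ := hx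
  have hp := hpf.out
  have hp1 : 1 < p := hp.one_lt
  -- convergence of appr
  have happr : ∀ z : ℤ_[p], Filter.Tendsto (fun k => ((z.appr k : ℤ_[p]))) Filter.atTop (nhds z) := by
    intro z
    rw [← tendsto_sub_nhds_zero_iff]
    have hb : ∀ k, ‖(z.appr k : ℤ_[p]) - z‖ ≤ ((p:ℝ)⁻¹) ^ k := by
      intro k
      have h1 : ‖-(z - (z.appr k : ℤ_[p]))‖ ≤ (p : ℝ) ^ (-(k:ℤ)) := by
        rw [norm_neg, PadicInt.norm_le_pow_iff_mem_span_pow]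
        exact z.appr_spec k
      calc ‖(z.appr k : ℤ_[p]) - z‖ = ‖-(z - (z.appr k : ℤ_[p]))‖ := by rw [neg_sub]
        _ ≤ (p : ℝ) ^ (-(k:ℤ)) := h1
        _ = ((p:ℝ)⁻¹) ^ k := by rw [zpow_neg, zpow_natCast, inv_pow]
    have ht : Filter.Tendsto (fun k => ((p:ℝ)⁻¹) ^ k) Filter.atTop (nhds 0) := by
      apply tendsto_pow_atTop_nhds_zero_of_lt_one
      · positivity
      · rw [inv_lt_one_iff₀]; right; exact_mod_cast hp1
    exact squeeze_zero_norm hb ht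
  -- step at naturals
  have hstep : ∀ n : ℕ, G ((n:ℤ_[p]) + 1) = -(if p ∣ n then 1 else (n:ℤ_[p])) * G n := by
    intro n
    rcases Nat.eq_zero_or_pos n with rfl | hn
    · simp only [Nat.cast_zero, zero_add, dvd_zero, if_true]
      have h0 := hG 0
      have h1 := hG 1
      simp only [Nat.cast_zero, Nat.cast_one] at h0 h1
      simp [h0, h1]
    · have hGn1 := hG (n + 1)
      have hGn := hG n
      rw [Finset.prod_filter] at hGn1 hGn
      rw [Finset.prod_Ico_succ_top hn] at hGn1
      push_cast at hGn1 ⊢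
      rw [hGn1, hGn]
      split_ifs with h
      · simp [h]; ring
      · simp [h]; ring
  -- p ∣ a + p * m iff a = 0 for a < p
  have hdvd : ∀ a m : ℕ, a < p → (p ∣ a + p * m ↔ a = 0) := by
    intro a m ha
    rw [Nat.add_comm, Nat.dvd_add_right ⟨m, rfl⟩]
    constructor
    · intro h; exact Nat.eq_zero_of_dvd_of_lt h ha
    · rintro rfl; exact dvd_zero p
  -- key step at arbitrary points
  have key : ∀ a : ℕ, a < p → ∀ z : ℤ_[p],
      G ((a:ℤ_[p]) + p * z + 1) = -(if a = 0 then 1 else ((a:ℤ_[p]) + p * z)) * G ((a:ℤ_[p]) + p * z) := by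
    intro a ha z
    set w : ℤ_[p] := (a:ℤ_[p]) + p * z with hw
    have hseq : Filter.Tendsto (fun k => ((a + p * z.appr k : ℕ) : ℤ_[p])) Filter.atTop (nhds w) := by
      have he : ∀ k, ((a + p * z.appr k : ℕ) : ℤ_[p]) = (a:ℤ_[p]) + (p:ℤ_[p]) * (z.appr k : ℤ_[p]) := by
        intro k; push_cast; ring
      simp only [he]
      exact Filter.Tendsto.const_add _ ((happr z).const_mul _)
    have hc : Continuous (fun t : ℤ_[p] => -(if a = 0 then 1 else t) * G t) := by
      split_ifs with h
      · exact continuous_const.mul hcont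
      · exact (continuous_neg.comp continuous_id).mul hcont
    have h1 : Filter.Tendsto (fun k => G (((a + p * z.appr k : ℕ) : ℤ_[p]) + 1))
        Filter.atTop (nhds (G (w + 1))) :=
      (hcont.tendsto _).comp (hseq.add tendsto_const_nhds)
    have h2 : Filter.Tendsto (fun k => G (((a + p * z.appr k : ℕ) : ℤ_[p]) + 1))
        Filter.atTop (nhds (-(if a = 0 then 1 else w) * G w)) := by
      refine Filter.Tendsto.congr
        (f₁ := fun k => -(if a = 0 then 1 else ((a + p * z.appr k : ℕ) : ℤ_[p])) * G ((a + p * z.appr k : ℕ) : ℤ_[p]))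
        ?_ ((hc.tendsto w).comp hseq)
      intro k
      have hs := hstep (a + p * z.appr k)
      simp only [hdvd a (z.appr k) ha] at hs
      exact hs.symm
    exact tendsto_nhds_unique h1 h2
  set H : ℤ_[p] → ℤ_[p] := fun t => G t * G (1 - t) with hH
  have hHcont : Continuous H := hcont.mul (hcont.comp (continuous_const.sub continuous_id))
  -- step for H at naturals, divisible case
  have hH2 : ∀ n : ℕ, p ∣ n → H ((n:ℤ_[p]) + 1) = H n := by
    intro n hdn
    obtain ⟨m, rfl⟩ := hdn
    have e1 : G ((↑(p * m):ℤ_[p]) + 1) = -G (↑(p * m)) := by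
      have hs := hstep (p * m)
      simp only [dvd_mul_right, if_true] at hs
      simpa using hs
    have e2 : G (1 - (↑(p * m):ℤ_[p])) = -G (-(↑(p * m):ℤ_[p])) := by
      have hk := key 0 hp.pos (-(m : ℤ_[p]))
      simp only [Nat.cast_zero, zero_add, if_pos rfl, neg_mul, one_mul] at hk
      have hw : (p:ℤ_[p]) * -(m : ℤ_[p]) = -(↑(p * m):ℤ_[p]) := by push_cast; ring
      rw [hw] at hk
      rw [show (1:ℤ_[p]) - ↑(p * m) = -(↑(p * m):ℤ_[p]) + 1 by ring, hk]
      simp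
    simp only [hH]
    rw [show (1:ℤ_[p]) - ((↑(p * m):ℤ_[p]) + 1) = -(↑(p * m):ℤ_[p]) by ring, e1]
    have e3 : G (-(↑(p * m):ℤ_[p])) = -G (1 - (↑(p * m):ℤ_[p])) := by rw [e2]; ring
    rw [e3]; ring
  -- step for H at naturals, unit case
  have hH1 : ∀ n : ℕ, ¬ p ∣ n → H ((n:ℤ_[p]) + 1) = -H n := by
    intro n hdn
    have hr0 : n % p ≠ 0 := fun h => hdn (Nat.dvd_of_mod_eq_zero h)
    have hrp : n % p < p := Nat.mod_lt _ hp.pos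
    have hnm : n % p + p * (n / p) = n := Nat.mod_add_div n p
    have e1 : G ((n:ℤ_[p]) + 1) = -(n:ℤ_[p]) * G n := by
      have hs := hstep n
      rw [if_neg hdn] at hs
      exact hs
    have e2 : G (1 - (n:ℤ_[p])) = (n:ℤ_[p]) * G (-(n:ℤ_[p])) := by
      have hap : p - n % p < p := by omega
      have hane : ¬ (p - n % p = 0) := by omega
      have hk := key (p - n % p) hap (-(↑(n / p):ℤ_[p]) - 1)
      rw [if_neg hane] at hk
      have hw : (↑(p - n % p):ℤ_[p]) + p * (-(↑(n / p):ℤ_[p]) - 1) = -(n:ℤ_[p]) := by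
        have : ((p - n % p : ℕ) : ℤ_[p]) = (p:ℤ_[p]) - (↑(n % p):ℤ_[p]) := by
          rw [Nat.cast_sub (le_of_lt hrp)]
        rw [this]
        have : ((n % p : ℕ):ℤ_[p]) + (p:ℤ_[p]) * (↑(n / p):ℤ_[p]) = (n:ℤ_[p]) := by
          exact_mod_cast congrArg (Nat.cast : ℕ → ℤ_[p]) hnm
        linear_combination -this
      rw [hw] at hk
      rw [show (1:ℤ_[p]) - (n:ℤ_[p]) = -(n:ℤ_[p]) + 1 by ring, hk]
      ring
    have hne : (n:ℤ_[p]) ≠ 0 := by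
      have : n ≠ 0 := by omega
      exact_mod_cast Nat.cast_ne_zero.mpr this
    apply mul_left_cancel₀ hne
    simp only [hH]
    rw [show (1:ℤ_[p]) - ((n:ℤ_[p]) + 1) = -(n:ℤ_[p]) by ring, e1]
    calc (n:ℤ_[p]) * (-(n:ℤ_[p]) * G n * G (-(n:ℤ_[p])))
        = -(n:ℤ_[p]) * G n * ((n:ℤ_[p]) * G (-(n:ℤ_[p]))) := by ring
      _ = -(n:ℤ_[p]) * G n * G (1 - (n:ℤ_[p])) := by rw [e2]
      _ = (n:ℤ_[p]) * -(G n * G (1 - (n:ℤ_[p]))) := by ring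
  -- H at naturals
  have hHn : ∀ n : ℕ, H n = if p ∣ n then (-1 : ℤ_[p]) else (-1) ^ (n % p) := by
    intro n
    induction n with
    | zero =>
      rw [if_pos (dvd_zero p)]
      simp only [hH, Nat.cast_zero, sub_zero]
      have h0 := hG 0
      have h1 := hG 1
      simp only [Nat.cast_zero, Nat.cast_one] at h0 h1
      simp [h0, h1]
    | succ n ih =>
      have hcast : ((n + 1 : ℕ):ℤ_[p]) = (n:ℤ_[p]) + 1 := by push_cast; ring
      by_cases hdn : p ∣ n
      · rw [hcast, hH2 n hdn, ih, if_pos hdn]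
        obtain ⟨m, rfl⟩ := hdn
        have hnd1 : ¬ p ∣ (p * m + 1) := by
          intro h
          have h1 : p ∣ 1 := (Nat.dvd_add_right ⟨m, rfl⟩).mp h
          rw [Nat.dvd_one] at h1; omega
        rw [if_neg hnd1]
        have hmod : (p * m + 1) % p = 1 := by
          rw [Nat.mul_add_mod]
          exact Nat.mod_eq_of_lt hp1
        rw [hmod, pow_one]
      · rw [hcast, hH1 n hdn, ih, if_neg hdn]
        have hr0 : n % p ≠ 0 := fun h => hdn (Nat.dvd_of_mod_eq_zero h)
        have hrp : n % p < p := Nat.mod_lt _ hp.pos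
        have hsucc : (n + 1) % p = (n % p + 1) % p := by
          conv_lhs => rw [Nat.add_mod, Nat.mod_eq_of_lt hp1]
        rcases eq_or_lt_of_le (Nat.succ_le_of_lt hrp) with heq | hlt
        · -- n % p + 1 = p
          have hd1 : p ∣ n + 1 := by
            apply Nat.dvd_of_mod_eq_zero
            have heq' : n % p + 1 = p := heq
            rw [hsucc, heq', Nat.mod_self]
          rw [if_pos hd1]
          have : n % p = p - 1 := by omega
          rw [this]
          have hev : Even (p - 1) := Nat.Odd.sub_odd hodd odd_one
          rw [hev.neg_one_pow]
        · have hnd : ¬ p ∣ n + 1 := by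
            intro h
            have := Nat.eq_zero_of_dvd_of_lt h
            have h0 : (n + 1) % p = 0 := Nat.eq_zero_of_dvd_of_lt h |> fun _ => (Nat.mod_eq_zero_of_dvd h)
            rw [hsucc, Nat.mod_eq_of_lt hlt] at h0
            omega
          rw [if_neg hnd, hsucc, Nat.mod_eq_of_lt hlt, pow_succ]
          ring
  -- conclude by continuity
  have hxeq : x = (x0:ℤ_[p]) + p * y := by linear_combination hy
  have hseq : Filter.Tendsto (fun k => ((x0 + p * y.appr k : ℕ) : ℤ_[p])) Filter.atTop (nhds x) := by
    have he : ∀ k, ((x0 + p * y.appr k : ℕ) : ℤ_[p]) = (x0:ℤ_[p]) + (p:ℤ_[p]) * (y.appr k : ℤ_[p]) := by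
      intro k; push_cast; ring
    rw [hxeq]
    simp only [he]
    exact Filter.Tendsto.const_add _ ((happr y).const_mul _)
  have hval : ∀ k, H ((x0 + p * y.appr k : ℕ) : ℤ_[p]) = (-1) ^ x0 := by
    intro k
    rcases eq_or_lt_of_le hx0' with heq | hlt
    · have hdv : p ∣ x0 + p * y.appr k := by
        subst heq; exact ⟨1 + y.appr k, by ring⟩
      rw [hHn, if_pos hdv, heq, hodd.neg_one_pow]
    · have hdv : ¬ p ∣ x0 + p * y.appr k := by
        rw [hdvd x0 (y.appr k) hlt]; omega
      rw [hHn, if_neg hdv]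
      congr 1
      rw [Nat.add_mul_mod_self_left]
      exact Nat.mod_eq_of_lt hlt
  have hlim1 : Filter.Tendsto (fun k => H ((x0 + p * y.appr k : ℕ) : ℤ_[p])) Filter.atTop (nhds (H x)) :=
    (hHcont.tendsto _).comp hseq
  have hlim2 : Filter.Tendsto (fun k => H ((x0 + p * y.appr k : ℕ) : ℤ_[p])) Filter.atTop (nhds ((-1) ^ x0)) := by
    simp only [hval]; exact tendsto_const_nhds
  have := tendsto_nhds_unique hlim1 hlim2
  simpa [hH] using this
end

section
/- Let p be an odd prime, q = p^r, and d ≥ 4 even with p ∤ d(d−1). For every integer m with 1 ≤ m ≤ q−2, m ≠ (q−1)/2, and every i with 0 ≤ i ≤ r−1, one has ⌊−2mp^i/(q−1)⌋ + ⌊mdp^i/(q−1)⌋ + ⌊−m(d−1)p^i/(q−1)⌋ − ⌊−mp^i/(q−1)⌋ + 1 = Σ_{h=1}^{d−2} ⌊⟨hp^i/(d−1)⟩ − mp^i/(q−1)⌋ + Σ_{h=1, h≠d/2}^{d−1} ⌊⟨−hp^i/d⟩ + mp^i/(q−1)⌋. -/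
/-!
Put `x = m p^i / (q - 1)`. As `p^i` is a unit modulo `d - 1` and modulo `d`, multiplying by `p^i`
(resp. `-p^i`) permutes the residues, so Hermite's identity `∑_{k<n} ⌊x + k/n⌋ = ⌊n x⌋` evaluates
the first sum as `⌊-(d-1)x⌋ - ⌊-x⌋` and the second as `⌊d x⌋ - ⌊x⌋ - ⌊x + 1/2⌋ = ⌊d x⌋ - ⌊2x⌋`;
the excluded residue `d/2` is fixed by the permutation because `p^i` is odd. Finally
`m ≠ (q - 1)/2` makes `2x` a non-integer, so `⌊-2x⌋ + 1 = -⌊2x⌋`.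
-/

open Finset Function

theorem Finset.sum_Icc_one_pred_add_zero {M : Type*} [AddCommMonoid M] (n : ℕ) (hn : 0 < n)
    (f : ℕ → M) : ∑ h ∈ Icc 1 (n - 1), f h + f 0 = ∑ h ∈ range n, f h := by
  have hIcc : Icc 1 (n - 1) = (range n).erase 0 := by
    ext h; simp only [mem_Icc, mem_erase, mem_range]; omega
  rw [hIcc, sum_erase_add _ _ (mem_range.2 hn)]

theorem Nat.not_dvd_two_mul_mul_of_coprime {N m a : ℕ} (ha : Nat.Coprime a N) (hm : 0 < m)
    (hmN : m < N) (h2m : 2 * m ≠ N) : ¬ N ∣ 2 * m * a := fun hdvd =>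
  h2m <| Nat.eq_of_dvd_of_lt_two_mul (by omega) (ha.symm.dvd_of_dvd_mul_right hdvd) (by omega)

theorem Nat.not_dvd_pow_sub_one {p r : ℕ} (hp : 1 < p) (hr : r ≠ 0) : ¬ p ∣ p ^ r - 1 := fun h => by
  have h1 := Nat.dvd_sub (dvd_pow_self p hr) h
  rw [Nat.sub_sub_self (Nat.one_le_pow _ _ (by omega))] at h1
  exact hp.ne' (Nat.dvd_one.1 h1)

theorem ZMod.sum_range_natCast {M : Type*} [AddCommMonoid M] (n : ℕ) [NeZero n]
    (f : ZMod n → M) : ∑ h ∈ range n, f h = ∑ z, f z := by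
  obtain ⟨k, rfl⟩ : ∃ k, n = k + 1 := Nat.exists_eq_succ_of_ne_zero (NeZero.ne n)
  exact (Fin.sum_univ_eq_sum_range (fun h => f h) (k + 1)).symm.trans
    (Fintype.sum_congr _ _ fun i => congrArg f (Fin.cast_val_eq_self i))

theorem ZMod.sum_range_val_mul_intCast {M : Type*} [AddCommMonoid M] (n : ℕ) [NeZero n] {a : ℤ}
    (ha : IsCoprime a n) (f : ℕ → M) :
    ∑ h ∈ range n, f ((h : ZMod n) * a).val = ∑ h ∈ range n, f h := by
  calc ∑ h ∈ range n, f ((h : ZMod n) * a).val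
      = ∑ z : ZMod n, f (z * ZMod.unitOfIsCoprime a ha).val :=
        ZMod.sum_range_natCast n fun z => f (z * a).val
    _ = ∑ z : ZMod n, f z.val :=
        Equiv.sum_comp (Units.mulRight (ZMod.unitOfIsCoprime a ha)) fun z => f z.val
    _ = ∑ h ∈ range n, f h := by
        rw [← ZMod.sum_range_natCast n]
        exact sum_congr rfl fun h hh => by rw [ZMod.val_cast_of_lt (mem_range.1 hh)]

section FloorSums

variable {K : Type*} [Field K] [LinearOrder K] [IsStrictOrderedRing K] [FloorRing K]

theorem Int.floor_neg_div_natCast_of_not_dvd {k N : ℕ} (hN : 0 < N) (h : ¬ N ∣ k) :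
    ⌊-((k : K) / N)⌋ = -⌊(k : K) / N⌋ - 1 := by
  have hmod : ((k % N : ℕ) : K) ≠ 0 := by exact_mod_cast fun h0 => h (Nat.dvd_of_mod_eq_zero h0)
  have hfract : Int.fract ((k : K) / N) ≠ 0 := by
    rw [Int.fract_div_natCast_eq_div_natCast_mod]
    exact div_ne_zero hmod (by exact_mod_cast hN.ne')
  rw [Int.floor_neg, (Int.ceil_eq_floor_add_one_iff_notMem _).2 (Int.fract_ne_zero_iff.1 hfract)]
  ring

/- Hermite's identity. The defect `∑ ⌊x + k/n⌋ - ⌊n x⌋` is `1/n`-periodic in `x` and vanishes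
on `[0, 1/n)`. -/
theorem sum_range_floor_add_div (n : ℕ) (hn : 0 < n) (x : K) :
    ∑ k ∈ range n, ⌊x + k / n⌋ = ⌊n * x⌋ := by
  have hn' : (0 : K) < n := by exact_mod_cast hn
  set g : K → ℤ := fun x => ∑ k ∈ range n, ⌊x + k / n⌋ - ⌊n * x⌋ with hg
  have hper : Periodic g (1 / n) := by
    intro x
    have hshift : ∀ k : ℕ, x + 1 / n + k / n = x + ((k + 1 : ℕ) : K) / n := by
      intro k; push_cast; ring
    simp only [hg, hshift]
    have hsucc := sum_range_succ' (fun k : ℕ => ⌊x + (k : K) / n⌋) n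
    rw [sum_range_succ, div_self hn'.ne', Int.floor_add_one, Nat.cast_zero, zero_div,
      add_zero] at hsucc
    rw [mul_add, mul_one_div_cancel hn'.ne', Int.floor_add_one]
    linarith
  have hsmall : ∀ y : K, 0 ≤ y → y < 1 / n → g y = 0 := by
    intro y hy0 hy1
    have hterm : ∀ k ∈ range n, ⌊y + k / n⌋ = 0 := by
      intro k hk
      have hk : (k : K) + 1 ≤ n := by exact_mod_cast mem_range.1 hk
      refine Int.floor_eq_zero_iff.2 ⟨by positivity, ?_⟩
      calc y + k / n < 1 / n + k / n := by linarith
        _ = (k + 1) / n := by ring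
        _ ≤ 1 := (div_le_one hn').2 hk
    have hny : ⌊n * y⌋ = 0 :=
      Int.floor_eq_zero_iff.2 ⟨by positivity, by rwa [lt_div_iff₀ hn', mul_comm] at hy1⟩
    simp only [hg, sum_eq_zero hterm, hny, sub_zero]
  have hfract : x - ⌊n * x⌋ * (1 / n) = Int.fract (n * x) / n := by
    rw [Int.fract]; field_simp
  have key : g x = 0 := by
    rw [← hper.sub_int_mul_eq ⌊n * x⌋, hfract]
    exact hsmall _ (by positivity) (div_lt_div_of_pos_right (Int.fract_lt_one _) hn')
  simpa only [hg, sub_eq_zero] using key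

theorem sum_range_floor_fract_mul_div_add (n : ℕ) (hn : 0 < n) {a : ℤ} (ha : IsCoprime a n)
    (y : K) : ∑ h ∈ range n, ⌊Int.fract ((h : K) * a / n) + y⌋ = ⌊n * y⌋ := by
  have : NeZero n := ⟨hn.ne'⟩
  have hfract : ∀ h : ℕ, Int.fract ((h : K) * a / n) = (((h : ZMod n) * a).val : K) / n := by
    intro h
    rw [← Int.cast_natCast h, ← Int.cast_mul, Int.fract_div_intCast_eq_div_intCast_mod,
      ← ZMod.val_intCast]
    push_cast
    rfl
  simp only [hfract]
  rw [ZMod.sum_range_val_mul_intCast n ha fun k => ⌊(k : K) / n + y⌋]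
  simp only [add_comm _ y]
  exact sum_range_floor_add_div n hn y

theorem sum_Icc_floor_fract_mul_div_add (n : ℕ) (hn : 0 < n) {a : ℤ} (ha : IsCoprime a n)
    (y : K) : ∑ h ∈ Icc 1 (n - 1), ⌊Int.fract ((h : K) * a / n) + y⌋ = ⌊n * y⌋ - ⌊y⌋ := by
  rw [← sum_range_floor_fract_mul_div_add n hn ha y, ← Finset.sum_Icc_one_pred_add_zero n hn]
  simp

theorem sum_Icc_ne_half_floor_fract_mul_div_add (n : ℕ) (hn : 0 < n) (hne : Even n) {a : ℤ}
    (ha : IsCoprime a n) (y : K) :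
    ∑ h ∈ (Icc 1 (n - 1)).filter (fun h => h ≠ n / 2), ⌊Int.fract ((h : K) * a / n) + y⌋ =
      ⌊n * y⌋ - ⌊2 * y⌋ := by
  obtain ⟨k, rfl⟩ := hne
  have hk : (k : K) ≠ 0 := by norm_cast; omega
  have hodd : Odd a := Int.isCoprime_two_right.1 (ha.of_isCoprime_of_dvd_right ⟨k, by push_cast; ring⟩)
  have hhalf : Int.fract (((k + k) / 2 : ℕ) * a / (k + k : ℕ) : K) = 1 / 2 := by
    rw [show (k + k) / 2 = k by omega, show (k * a / (k + k : ℕ) : K) = (a : K) / (2 : ℕ) by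
      push_cast; field_simp; ring, Int.fract_div_intCast_eq_div_intCast_mod]
    norm_num [Int.odd_iff.1 hodd]
  have hfull := sum_Icc_floor_fract_mul_div_add (k + k) hn ha y
  rw [← sum_erase_add _ _ (show (k + k) / 2 ∈ Icc 1 (k + k - 1) by simp only [mem_Icc]; omega),
    hhalf, add_comm _ y] at hfull
  have htwo := sum_range_floor_add_div 2 two_pos y
  norm_num [sum_range_succ] at htwo
  rw [filter_ne']
  linarith

end FloorSums

theorem stmt8_general (p r d q : ℕ) (hp : p.Prime)
    (hq : q = p ^ r) (hde : Even d) (hpd : ¬ p ∣ d * (d - 1))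
    (m : ℕ) (hm1 : 1 ≤ m) (hm2 : m ≤ q - 2) (hm3 : m ≠ (q - 1) / 2)
    (i : ℕ) :
    ⌊(-2 * (m : ℚ) * (p : ℚ) ^ i) / ((q : ℚ) - 1)⌋ +
      ⌊((m : ℚ) * d * (p : ℚ) ^ i) / ((q : ℚ) - 1)⌋ +
      ⌊(-(m : ℚ) * ((d : ℚ) - 1) * (p : ℚ) ^ i) / ((q : ℚ) - 1)⌋ -
      ⌊(-(m : ℚ) * (p : ℚ) ^ i) / ((q : ℚ) - 1)⌋ + 1 =
    (∑ h ∈ Finset.Icc 1 (d - 2),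
        ⌊Int.fract (((h : ℚ) * (p : ℚ) ^ i) / ((d : ℚ) - 1)) -
          ((m : ℚ) * (p : ℚ) ^ i) / ((q : ℚ) - 1)⌋) +
      ∑ h ∈ (Finset.Icc 1 (d - 1)).filter (fun h => h ≠ d / 2),
        ⌊Int.fract ((-(h : ℚ) * (p : ℚ) ^ i) / (d : ℚ)) +
          ((m : ℚ) * (p : ℚ) ^ i) / ((q : ℚ) - 1)⌋ := by
  have hd : 0 < d := Nat.pos_of_ne_zero fun hd => hpd (by simp [hd])
  have hd2 : 2 ≤ d := by obtain ⟨k, rfl⟩ := hde; omega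
  have hq1 : 0 < q - 1 := by omega
  have hcop (n : ℕ) (hn : ¬ p ∣ n) : Nat.Coprime (p ^ i) n :=
    ((hp.coprime_iff_not_dvd).2 hn).pow_left i
  have hpq1 : ¬ p ∣ q - 1 := by
    subst hq
    exact Nat.not_dvd_pow_sub_one hp.one_lt (by rintro rfl; simp at hm2; omega)
  set x : ℚ := m * p ^ i / (q - 1)
  have hneg := Int.floor_neg_div_natCast_of_not_dvd (K := ℚ) hq1
    (Nat.not_dvd_two_mul_mul_of_coprime (hcop _ hpq1) hm1 (by omega) (by omega))
  have hsum1 := sum_Icc_floor_fract_mul_div_add (K := ℚ) (d - 1) (by omega)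
    (Nat.isCoprime_iff_coprime.2 (hcop _ fun h => hpd (h.mul_left d))) (-x)
  have hsum2 := sum_Icc_ne_half_floor_fract_mul_div_add (K := ℚ) d hd hde
    (Nat.isCoprime_iff_coprime.2 (hcop _ fun h => hpd (h.mul_right _))).neg_left x
  push_cast [Nat.cast_pred hd, Nat.cast_pred (by omega : 0 < q)] at hneg hsum1 hsum2
  rw [show (2 * m * p ^ i / (q - 1) : ℚ) = 2 * x by ring] at hneg
  rw [show d - 1 - 1 = d - 2 by omega] at hsum1
  rw [show (-2 * m * p ^ i / (q - 1) : ℚ) = -(2 * x) by ring,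
    show (m * d * p ^ i / (q - 1) : ℚ) = d * x by ring,
    show (-m * (d - 1) * p ^ i / (q - 1) : ℚ) = (d - 1) * -x by ring,
    show (-m * p ^ i / (q - 1) : ℚ) = -x by ring]
  simp only [sub_eq_add_neg, neg_mul, mul_neg] at hsum1 hsum2 ⊢
  linarith

/-- Floor-sum identity (even degree case): for `d ≥ 4` even, `p ∤ d(d-1)`, `q = p^r`,
`1 ≤ m ≤ q-2`, `m ≠ (q-1)/2` and `0 ≤ i ≤ r-1`. -/
theorem stmt8 (p r d q : ℕ) (hp : p.Prime) (hodd : Odd p) (hr : 0 < r)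
    (hq : q = p ^ r) (hd : 4 ≤ d) (hde : Even d) (hpd : ¬ p ∣ d * (d - 1))
    (m : ℕ) (hm1 : 1 ≤ m) (hm2 : m ≤ q - 2) (hm3 : m ≠ (q - 1) / 2)
    (i : ℕ) (hi : i ≤ r - 1) :
    ⌊(-2 * (m : ℚ) * (p : ℚ) ^ i) / ((q : ℚ) - 1)⌋ +
      ⌊((m : ℚ) * d * (p : ℚ) ^ i) / ((q : ℚ) - 1)⌋ +
      ⌊(-(m : ℚ) * ((d : ℚ) - 1) * (p : ℚ) ^ i) / ((q : ℚ) - 1)⌋ -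
      ⌊(-(m : ℚ) * (p : ℚ) ^ i) / ((q : ℚ) - 1)⌋ + 1 =
    (∑ h ∈ Finset.Icc 1 (d - 2),
        ⌊Int.fract (((h : ℚ) * (p : ℚ) ^ i) / ((d : ℚ) - 1)) -
          ((m : ℚ) * (p : ℚ) ^ i) / ((q : ℚ) - 1)⌋) +
      ∑ h ∈ (Finset.Icc 1 (d - 1)).filter (fun h => h ≠ d / 2),
        ⌊Int.fract ((-(h : ℚ) * (p : ℚ) ^ i) / (d : ℚ)) +
          ((m : ℚ) * (p : ℚ) ^ i) / ((q : ℚ) - 1)⌋ :=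
  stmt8_general p r d q hp hq hde hpd m hm1 hm2 hm3 i
end

section
/- Let p be an odd prime, q = p^r, and d ≥ 3 odd with p ∤ d(d−1). For every integer m with 1 ≤ m ≤ q−2 and every i with 0 ≤ i ≤ r−1, one has ⌊−2mp^i/(q−1)⌋ + ⌊mdp^i/(q−1)⌋ + ⌊−m(d−1)p^i/(q−1)⌋ − ⌊−mp^i/(q−1)⌋ + 1 = Σ_{h=1}^{d−2} ⌊⟨hp^i/(d−1)⟩ − mp^i/(q−1)⌋ + ⌊⟨p^i/2⟩ − mp^i/(q−1)⌋ + Σ_{h=1}^{d−1} ⌊⟨−hp^i/d⟩ + mp^i/(q−1)⌋. -/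
lemma floor_intadd (a : ℕ) (ha : 0 < a) (z : ℤ) (f : ℚ) (hf0 : 0 ≤ f) (hf1 : f < 1) :
    ⌊((z : ℚ) + f) / (a : ℚ)⌋ = z / (a : ℤ) := by
  have haZ : (0 : ℤ) < (a : ℤ) := by exact_mod_cast ha
  have haQ : (0 : ℚ) < (a : ℚ) := by exact_mod_cast ha
  have hze : (a : ℤ) * (z / (a : ℤ)) + z % (a : ℤ) = z := Int.mul_ediv_add_emod z a
  have hm0 : 0 ≤ z % (a : ℤ) := Int.emod_nonneg z haZ.ne'
  have hm1 : z % (a : ℤ) < (a : ℤ) := Int.emod_lt_of_pos z haZ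
  have hzeQ : (a : ℚ) * ((z / (a : ℤ) : ℤ) : ℚ) + ((z % (a : ℤ) : ℤ) : ℚ) = (z : ℚ) := by
    exact_mod_cast congrArg (fun t : ℤ => (t : ℚ)) hze
  have hm0Q : (0 : ℚ) ≤ ((z % (a : ℤ) : ℤ) : ℚ) := by exact_mod_cast hm0
  have hm1Q : ((z % (a : ℤ) : ℤ) : ℚ) + 1 ≤ (a : ℚ) := by exact_mod_cast hm1
  rw [Int.floor_eq_iff]
  constructor
  · rw [le_div_iff₀ haQ]
    nlinarith
  · rw [div_lt_iff₀ haQ]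
    nlinarith

lemma sum_ediv (a : ℕ) (ha : 0 < a) (k : ℤ) :
    ∑ j ∈ Finset.Icc 1 (a - 1), ((j : ℤ) + k) / (a : ℤ) = k - k / (a : ℤ) := by
  have haZ : (0 : ℤ) < (a : ℤ) := by exact_mod_cast ha
  obtain ⟨s, t, hk, ht0, hta⟩ : ∃ s t : ℤ, k = (a : ℤ) * s + t ∧ 0 ≤ t ∧ t < (a : ℤ) :=
    ⟨k / a, k % a, (Int.mul_ediv_add_emod k a).symm, Int.emod_nonneg k haZ.ne',
      Int.emod_lt_of_pos k haZ⟩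
  have hka : k / (a : ℤ) = s := by
    rw [hk, add_comm, Int.add_mul_ediv_left _ _ haZ.ne', Int.ediv_eq_zero_of_lt ht0 hta,
      zero_add]
  have step : ∀ j ∈ Finset.Icc 1 (a - 1),
      ((j : ℤ) + k) / (a : ℤ) = s + (if (a : ℤ) ≤ (j : ℤ) + t then 1 else 0) := by
    intro j hj
    rw [Finset.mem_Icc] at hj
    have hj1 : (1 : ℤ) ≤ (j : ℤ) := by exact_mod_cast hj.1
    have hj2 : (j : ℤ) ≤ (a : ℤ) - 1 := by
      have := hj.2; omega
    have e1 : (j : ℤ) + k = ((j : ℤ) + t) + s * (a : ℤ) := by rw [hk]; ring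
    rw [e1, Int.add_mul_ediv_right _ _ haZ.ne']
    by_cases hc : (a : ℤ) ≤ (j : ℤ) + t
    · rw [if_pos hc]
      have e2 : (j : ℤ) + t = ((j : ℤ) + t - (a : ℤ)) + 1 * (a : ℤ) := by ring
      rw [e2, Int.add_mul_ediv_right _ _ haZ.ne',
        Int.ediv_eq_zero_of_lt (by omega) (by omega)]
      ring
    · rw [if_neg hc, Int.ediv_eq_zero_of_lt (by omega) (by omega)]
      ring
  rw [Finset.sum_congr rfl step, Finset.sum_add_distrib, Finset.sum_const, Finset.sum_boole]
  have hfil : (Finset.Icc 1 (a - 1)).filter (fun j : ℕ => (a : ℤ) ≤ (j : ℤ) + t)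
      = Finset.Icc (a - t.toNat) (a - 1) := by
    ext j
    simp only [Finset.mem_filter, Finset.mem_Icc]
    omega
  rw [hfil, Nat.card_Icc, Nat.card_Icc]
  have h1 : ((a - 1 + 1 - 1 : ℕ) : ℤ) = (a : ℤ) - 1 := by omega
  have h2 : ((a - 1 + 1 - (a - t.toNat) : ℕ) : ℤ) = t := by omega
  rw [nsmul_eq_mul, h1, h2, hka, hk]
  ring

lemma bij_sum (a : ℕ) (ha : 0 < a) (z : ℤ) (hz : Int.gcd z (a : ℤ) = 1) (F : ℤ → ℤ) :
    ∑ h ∈ Finset.Icc 1 (a - 1), F ((h : ℤ) * z % (a : ℤ))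
      = ∑ j ∈ Finset.Icc 1 (a - 1), F (j : ℤ) := by
  have haZ : (0 : ℤ) < (a : ℤ) := by exact_mod_cast ha
  set u := Int.gcdA z (a : ℤ) with hu
  set v := Int.gcdB z (a : ℤ) with hv
  have huv : z * u + (a : ℤ) * v = 1 := by
    have h := Int.gcd_eq_gcd_ab z (a : ℤ)
    rw [hz] at h
    exact_mod_cast h.symm
  have hzu : z * u % (a : ℤ) = 1 % (a : ℤ) := by
    have : z * u = 1 - (a : ℤ) * v := by linarith
    rw [this, Int.sub_emod, Int.mul_emod_right, sub_zero, Int.emod_emod_of_dvd _ dvd_rfl]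
  have huz : u * z % (a : ℤ) = 1 % (a : ℤ) := by rw [mul_comm]; exact hzu
  -- key modular fact
  have key : ∀ c w : ℤ, c * w % (a : ℤ) = 1 % (a : ℤ) → ∀ h : ℕ, h ∈ Finset.Icc 1 (a - 1) →
      ((h : ℤ) * c % (a : ℤ)) * w % (a : ℤ) = (h : ℤ) := by
    intro c w hcw h hh
    rw [Finset.mem_Icc] at hh
    have h1 : (h : ℤ) * c % (a : ℤ) ≡ (h : ℤ) * c [ZMOD (a : ℤ)] :=
      Int.emod_emod_of_dvd _ dvd_rfl
    have h2 : ((h : ℤ) * c % (a : ℤ)) * w ≡ (h : ℤ) * (c * w) [ZMOD (a : ℤ)] := by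
      calc ((h : ℤ) * c % (a : ℤ)) * w ≡ ((h : ℤ) * c) * w [ZMOD (a : ℤ)] := h1.mul_right w
        _ = (h : ℤ) * (c * w) := by ring
    have h3 : (h : ℤ) * (c * w) ≡ (h : ℤ) * 1 [ZMOD (a : ℤ)] := Int.ModEq.mul_left _ hcw
    have h4 : ((h : ℤ) * c % (a : ℤ)) * w ≡ (h : ℤ) [ZMOD (a : ℤ)] := by
      simpa using h2.trans h3
    have := h4
    unfold Int.ModEq at this
    rw [this, Int.emod_eq_of_lt (Int.natCast_nonneg h) (by have := hh.2; omega)]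
  have mem : ∀ c w : ℤ, c * w % (a : ℤ) = 1 % (a : ℤ) → ∀ h ∈ Finset.Icc 1 (a - 1),
      ((h : ℤ) * c % (a : ℤ)).toNat ∈ Finset.Icc 1 (a - 1) := by
    intro c w hcw h hh
    have hk := key c w hcw h hh
    rw [Finset.mem_Icc] at hh ⊢
    have h0 : 0 ≤ (h : ℤ) * c % (a : ℤ) := Int.emod_nonneg _ haZ.ne'
    have h1 : (h : ℤ) * c % (a : ℤ) < (a : ℤ) := Int.emod_lt_of_pos _ haZ
    have hne : (h : ℤ) * c % (a : ℤ) ≠ 0 := by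
      intro h0'
      rw [h0', zero_mul, Int.zero_emod] at hk
      omega
    omega
  refine Finset.sum_nbij' (fun h => ((h : ℤ) * z % (a : ℤ)).toNat)
    (fun j => ((j : ℤ) * u % (a : ℤ)).toNat) (mem z u hzu) (mem u z huz) ?_ ?_ ?_
  · intro h hh
    have h0 : 0 ≤ (h : ℤ) * z % (a : ℤ) := Int.emod_nonneg _ haZ.ne'
    simp only [Int.toNat_of_nonneg h0]
    rw [key z u hzu h hh, Int.toNat_natCast]
  · intro h hh
    have h0 : 0 ≤ (h : ℤ) * u % (a : ℤ) := Int.emod_nonneg _ haZ.ne'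
    simp only [Int.toNat_of_nonneg h0]
    rw [key u z huz h hh, Int.toNat_natCast]
  · intro h hh
    have h0 : 0 ≤ (h : ℤ) * z % (a : ℤ) := Int.emod_nonneg _ haZ.ne'
    rw [Int.toNat_of_nonneg h0]

lemma master (a : ℕ) (ha : 0 < a) (z : ℤ) (hz : Int.gcd z (a : ℤ) = 1) (y : ℚ) :
    ∑ h ∈ Finset.Icc 1 (a - 1), ⌊Int.fract ((((h : ℤ) * z : ℤ) : ℚ) / (a : ℚ)) + y⌋
      = ⌊(a : ℚ) * y⌋ - ⌊y⌋ := by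
  have haQ : (0 : ℚ) < (a : ℚ) := by exact_mod_cast ha
  set k := ⌊(a : ℚ) * y⌋ with hk
  set f := Int.fract ((a : ℚ) * y) with hf
  have hf0 : 0 ≤ f := Int.fract_nonneg _
  have hf1 : f < 1 := Int.fract_lt_one _
  have hy : y = ((k : ℚ) + f) / (a : ℚ) := by
    rw [eq_div_iff haQ.ne', hk, hf, Int.floor_add_fract, mul_comm]
  have hfy : ⌊y⌋ = k / (a : ℤ) := by
    conv_lhs => rw [hy]
    exact floor_intadd a ha k f hf0 hf1
  have hterm : ∀ h ∈ Finset.Icc 1 (a - 1),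
      ⌊Int.fract ((((h : ℤ) * z : ℤ) : ℚ) / (a : ℚ)) + y⌋
        = ((h : ℤ) * z % (a : ℤ) + k) / (a : ℤ) := by
    intro h hh
    rw [Int.fract_div_intCast_eq_div_intCast_mod]
    have e : (((h : ℤ) * z % (a : ℤ) : ℤ) : ℚ) / (a : ℚ) + y
        = (((((h : ℤ) * z % (a : ℤ) + k : ℤ)) : ℚ) + f) / (a : ℚ) := by
      rw [hy]; push_cast; ring
    rw [e, floor_intadd a ha _ f hf0 hf1]
  rw [Finset.sum_congr rfl hterm,
    bij_sum a ha z hz (fun w => (w + k) / (a : ℤ)), sum_ediv a ha k, hfy]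

/-- Floor-sum identity (odd degree case): for `d ≥ 3` odd, `p ∤ d(d-1)`, `q = p^r`,
`1 ≤ m ≤ q-2` and `0 ≤ i ≤ r-1`. -/
theorem stmt9 (p r d q : ℕ) (hp : p.Prime) (hodd : Odd p) (hr : 0 < r)
    (hq : q = p ^ r) (hd : 3 ≤ d) (hdo : Odd d) (hpd : ¬ p ∣ d * (d - 1))
    (m : ℕ) (hm1 : 1 ≤ m) (hm2 : m ≤ q - 2)
    (i : ℕ) (hi : i ≤ r - 1) :
    ⌊(-2 * (m : ℚ) * (p : ℚ) ^ i) / ((q : ℚ) - 1)⌋ +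
      ⌊((m : ℚ) * d * (p : ℚ) ^ i) / ((q : ℚ) - 1)⌋ +
      ⌊(-(m : ℚ) * ((d : ℚ) - 1) * (p : ℚ) ^ i) / ((q : ℚ) - 1)⌋ -
      ⌊(-(m : ℚ) * (p : ℚ) ^ i) / ((q : ℚ) - 1)⌋ + 1 =
    (∑ h ∈ Finset.Icc 1 (d - 2),
        ⌊Int.fract (((h : ℚ) * (p : ℚ) ^ i) / ((d : ℚ) - 1)) -
          ((m : ℚ) * (p : ℚ) ^ i) / ((q : ℚ) - 1)⌋) +
      ⌊Int.fract ((p : ℚ) ^ i / 2) - ((m : ℚ) * (p : ℚ) ^ i) / ((q : ℚ) - 1)⌋ +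
      ∑ h ∈ Finset.Icc 1 (d - 1),
        ⌊Int.fract ((-(h : ℚ) * (p : ℚ) ^ i) / (d : ℚ)) +
          ((m : ℚ) * (p : ℚ) ^ i) / ((q : ℚ) - 1)⌋ := by
  have hp2 : 2 ≤ p := hp.two_le
  have hp3 : 3 ≤ p := by
    rcases hodd with ⟨c, hc⟩; omega
  have hq3 : 3 ≤ q := by
    rw [hq]
    calc 3 ≤ p := hp3
    _ ≤ p ^ r := Nat.le_self_pow hr.ne' p
  -- divisibility facts
  have hpdvd : ¬ p ∣ d := fun h => hpd (h.mul_right _)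
  have hpdvd1 : ¬ p ∣ (d - 1) := fun h => hpd (h.mul_left _)
  have hp2d : ¬ p ∣ 2 := fun h => by
    have := Nat.le_of_dvd (by norm_num) h
    omega
  have copd : Nat.Coprime (p ^ i) d :=
    Nat.Coprime.pow_left _ ((Nat.Prime.coprime_iff_not_dvd hp).mpr hpdvd)
  have copd1 : Nat.Coprime (p ^ i) (d - 1) :=
    Nat.Coprime.pow_left _ ((Nat.Prime.coprime_iff_not_dvd hp).mpr hpdvd1)
  have cop2 : Nat.Coprime (p ^ i) 2 :=
    Nat.Coprime.pow_left _ ((Nat.Prime.coprime_iff_not_dvd hp).mpr hp2d)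
  have gcdA : Int.gcd (-(p : ℤ) ^ i) ((d : ℕ) : ℤ) = 1 := by
    simpa [Int.gcd, Int.natAbs_pow] using copd
  have gcdB : Int.gcd ((p : ℤ) ^ i) (((d - 1 : ℕ)) : ℤ) = 1 := by
    simpa [Int.gcd, Int.natAbs_pow] using copd1
  have gcdC : Int.gcd ((p : ℤ) ^ i) (((2 : ℕ)) : ℤ) = 1 := by
    simpa [Int.gcd, Int.natAbs_pow] using cop2
  have hndvd : ¬ (q - 1) ∣ (m * p ^ i) := by
    intro hdv
    have hpq1 : ¬ p ∣ (q - 1) := by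
      intro h
      have h1 : p ∣ q := hq ▸ dvd_pow_self p hr.ne'
      have h2 : p ∣ q - (q - 1) := Nat.dvd_sub h1 h
      rw [show q - (q - 1) = 1 by omega] at h2
      exact absurd (Nat.le_of_dvd one_pos h2) (by omega)
    have cop : Nat.Coprime (q - 1) (p ^ i) :=
      Nat.Coprime.pow_right _ (((Nat.Prime.coprime_iff_not_dvd hp).mpr hpq1).symm)
    have hdm : (q - 1) ∣ m := cop.dvd_of_dvd_mul_right hdv
    have := Nat.le_of_dvd (by omega) hdm
    omega
  set x : ℚ := (m : ℚ) * (p : ℚ) ^ i / ((q : ℚ) - 1) with hxdef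
  have hfractx : Int.fract x ≠ 0 := by
    have hxeq : x = ((m * p ^ i : ℕ) : ℚ) / ((q - 1 : ℕ) : ℚ) := by
      rw [hxdef]
      push_cast [Nat.cast_sub (show 1 ≤ q by omega)]
      ring
    rw [hxeq, Int.fract_div_natCast_eq_div_natCast_mod]
    have h1 : (m * p ^ i) % (q - 1) ≠ 0 := fun h0 => hndvd (Nat.dvd_of_mod_eq_zero h0)
    rw [div_ne_zero_iff]
    constructor
    · exact_mod_cast h1
    · exact Nat.cast_ne_zero.mpr (by omega)
  have hnegfloor : ⌊-x⌋ = -⌊x⌋ - 1 := by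
    have h1 : Int.fract (-x) = 1 - Int.fract x := Int.fract_neg hfractx
    have a1 : ((⌊x⌋ : ℤ) : ℚ) = x - Int.fract x := (Int.self_sub_fract x).symm
    have a2 : ((⌊-x⌋ : ℤ) : ℚ) = -x - Int.fract (-x) := (Int.self_sub_fract (-x)).symm
    have h2 : ((⌊-x⌋ : ℤ) : ℚ) = -((⌊x⌋ : ℤ) : ℚ) - 1 := by
      rw [a2, h1]; linarith [a1]
    exact_mod_cast h2
  have hA : (∑ h ∈ Finset.Icc 1 (d - 1), ⌊Int.fract ((-(h : ℚ) * (p : ℚ) ^ i) / (d : ℚ)) + x⌋)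
      = ⌊(d : ℚ) * x⌋ - ⌊x⌋ := by
    rw [← master d (by omega) (-(p : ℤ) ^ i) gcdA x]
    refine Finset.sum_congr rfl fun h hh => ?_
    have e : (-(h : ℚ) * (p : ℚ) ^ i) / (d : ℚ)
        = (((h : ℤ) * (-(p : ℤ) ^ i) : ℤ) : ℚ) / ((d : ℕ) : ℚ) := by push_cast; ring
    rw [e]
  have hdc : ((d - 1 : ℕ) : ℚ) = (d : ℚ) - 1 := by
    push_cast [Nat.cast_sub (show 1 ≤ d by omega)]
    ring
  have hB : (∑ h ∈ Finset.Icc 1 (d - 2),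
      ⌊Int.fract (((h : ℚ) * (p : ℚ) ^ i) / ((d : ℚ) - 1)) - x⌋)
      = ⌊((d : ℚ) - 1) * (-x)⌋ - ⌊-x⌋ := by
    have h2 := master (d - 1) (by omega) ((p : ℤ) ^ i) gcdB (-x)
    rw [show d - 1 - 1 = d - 2 by omega, hdc] at h2
    rw [← h2]
    refine Finset.sum_congr rfl fun h hh => ?_
    rw [sub_eq_add_neg]
    have e : ((h : ℚ) * (p : ℚ) ^ i) / ((d : ℚ) - 1)
        = (((h : ℤ) * ((p : ℤ) ^ i) : ℤ) : ℚ) / ((d : ℚ) - 1) := by push_cast; ring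
    rw [e]
  have hC : ⌊Int.fract ((p : ℚ) ^ i / 2) - x⌋ = ⌊(2 : ℚ) * (-x)⌋ - ⌊-x⌋ := by
    have h2 := master 2 (by norm_num) ((p : ℤ) ^ i) gcdC (-x)
    rw [show (2 : ℕ) - 1 = 1 by norm_num, Finset.Icc_self, Finset.sum_singleton,
      show ((2 : ℕ) : ℚ) = (2 : ℚ) by norm_num] at h2
    rw [← h2, sub_eq_add_neg]
    have e : (p : ℚ) ^ i / 2 = ((((1 : ℕ) : ℤ) * ((p : ℤ) ^ i) : ℤ) : ℚ) / (2 : ℚ) := by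
      push_cast; ring
    rw [e]
  have e1 : (-2 * (m : ℚ) * (p : ℚ) ^ i) / ((q : ℚ) - 1) = (2 : ℚ) * (-x) := by
    rw [hxdef]; ring
  have e2 : ((m : ℚ) * d * (p : ℚ) ^ i) / ((q : ℚ) - 1) = (d : ℚ) * x := by
    rw [hxdef]; ring
  have e3 : (-(m : ℚ) * ((d : ℚ) - 1) * (p : ℚ) ^ i) / ((q : ℚ) - 1) = ((d : ℚ) - 1) * (-x) := by
    rw [hxdef]; ring
  have e4 : (-(m : ℚ) * (p : ℚ) ^ i) / ((q : ℚ) - 1) = -x := by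
    rw [hxdef]; ring
  rw [e1, e2, e3, e4, hA, hB, hC]
  omega
end

section
/- Let p be an odd prime, q = p^r, and let 0 ≤ m ≤ q−2 with m ≠ (q−1)/2. Then Π_{i=0}^{r−1} [Γ_p(⟨(1/2 − m/(q−1))p^i⟩) · Γ_p(⟨(1/2 + m/(q−1))p^i⟩)] / [Γ_p(⟨p^i/2⟩)^2] = ω̄^m(−1). -/
/-!
The functional equation of `Γ_p` extends from `ℕ` to `ℤ_p` by continuity, since `ℕ` is dense in
each residue class mod `p`. Inducting along `ℕ` then gives the reflection formula
`Γ_p(x) Γ_p(1 - x) = -(-1)^{x̄}`, with `x̄ ∈ {0, …, p - 1}` the residue of `-x`, and it extends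
to `ℤ_p` in the same way. Numerator and denominator of each factor have the form
`Γ_p(a u) Γ_p(b u)` with `u = 1/(q-1)` and `a + b = q - 1`, i.e. `a u = 1 - b u`; as
`u ≡ -1 (mod p)`, such a pair equals `-(-1)^{b mod p}`. The product thus reduces to powers of `-1`
with exponents `∑ᵢ ((n pⁱ) mod (q-1)) mod p`, for `n = (q-1)/2 + m` and `n = (q-1)/2`.
Multiplying by `p` rotates the `r` base-`p` digits of `n mod (q-1)`, so this sum is a digit sum,
which is `≡ n (mod 2)` because `p` is odd. Finally `ω̄(-1) = -1`: a root of unity of order prime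
to `p` is determined by its residue mod `p`.
-/

open Finset PadicInt

theorem eq_one_of_pow_eq_one_of_norm_sub_one_lt {K : Type*} [NormedField K]
    [IsUltrametricDist K] {z : K} {n : ℕ} (hz : z ^ n = 1) (hz1 : ‖z - 1‖ < 1)
    (hn : ‖(n : K)‖ = 1) : z = 1 := by
  have hz_norm : ‖z‖ = 1 := by
    have h := IsUltrametricDist.norm_add_eq_max_of_norm_ne_norm (x := z - 1) (y := 1)
      (by rw [norm_one]; exact hz1.ne)
    rwa [sub_add_cancel, norm_one, max_eq_right hz1.le] at h
  have hpow : ∀ i, ‖z ^ i - 1‖ ≤ ‖z - 1‖ := fun i => by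
    rw [← geom_sum_mul, norm_mul]
    refine mul_le_of_le_one_left (norm_nonneg _) ?_
    exact IsUltrametricDist.norm_sum_le_of_forall_le_of_nonneg zero_le_one
      fun j _ => by rw [norm_pow, hz_norm, one_pow]
  -- `∑ zⁱ ≡ n` modulo the open unit ball, and `n` is a unit.
  have hsum : ‖∑ i ∈ range n, z ^ i‖ = 1 := by
    have hsplit : ∑ i ∈ range n, z ^ i = n + ∑ i ∈ range n, (z ^ i - 1) := by simp
    have hsmall : ‖∑ i ∈ range n, (z ^ i - 1)‖ < 1 :=
      (IsUltrametricDist.norm_sum_le_of_forall_le_of_nonneg (norm_nonneg _)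
        fun i _ => hpow i).trans_lt hz1
    rw [hsplit, IsUltrametricDist.norm_add_eq_max_of_norm_ne_norm (by rw [hn]; exact hsmall.ne'),
      hn, max_eq_left hsmall.le]
  have hroot : (∑ i ∈ range n, z ^ i) * (z - 1) = 0 := by rw [geom_sum_mul, hz, sub_self]
  have hne : ∑ i ∈ range n, z ^ i ≠ 0 := fun h => by simp [h] at hsum
  exact sub_eq_zero.mp ((mul_eq_zero.mp hroot).resolve_left hne)

theorem Nat.mod_add_mod_eq_of_dvd_add {a b Q : ℕ} (h : Q ∣ a + b) (hb : ¬ Q ∣ b) :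
    a % Q + b % Q = Q := by
  have hQ : 0 < Q := Nat.pos_of_ne_zero (by rintro rfl; simp_all)
  have hbQ : b % Q ≠ 0 := fun h0 => hb (Nat.dvd_of_mod_eq_zero h0)
  refine Nat.eq_of_dvd_of_lt_two_mul (by omega) ?_ ?_
  · rw [Nat.dvd_iff_mod_eq_zero, ← Nat.add_mod]
    exact Nat.mod_eq_zero_of_dvd h
  · have := Nat.mod_lt a hQ
    have := Nat.mod_lt b hQ
    omega

theorem Nat.mul_mod_add_mul_mod_eq {a b k Q : ℕ} (hk : Q.Coprime k) (h : Q ∣ a + b)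
    (hb : ¬ Q ∣ b) : a * k % Q + b * k % Q = Q :=
  Nat.mod_add_mod_eq_of_dvd_add (by rw [← add_mul]; exact h.mul_right k)
    fun hbk => hb (hk.dvd_of_dvd_mul_right hbk)

theorem Nat.ModEq.neg_one_pow_eq {R : Type*} [Ring R] {a b : ℕ} (h : a ≡ b [MOD 2]) :
    (-1 : R) ^ a = (-1) ^ b := by
  rw [neg_one_pow_eq_pow_mod_two, h, ← neg_one_pow_eq_pow_mod_two]

-- `S = ∑ c i * p ^ (k - 1 - i)`, but only its parity is recorded.
theorem Nat.exists_pow_mul_eq_add_of_mul_eq {p Q : ℕ} (hp : Odd p) {ν c : ℕ → ℕ}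
    (h : ∀ i, p * ν i = Q * c i + ν (i + 1)) (k : ℕ) :
    ∃ S, p ^ k * ν 0 = Q * S + ν k ∧ S ≡ ∑ i ∈ range k, c i [MOD 2] := by
  induction k with
  | zero => exact ⟨0, by simp, rfl⟩
  | succ k ih =>
    obtain ⟨S, hS, hSc⟩ := ih
    refine ⟨p * S + c k, ?_, ?_⟩
    · rw [pow_succ, mul_right_comm, hS, add_mul, mul_comm (ν k), h k]
      ring
    · have hp2 : p ≡ 1 [MOD 2] := Nat.odd_iff.mp hp
      rw [sum_range_succ]
      exact ((hp2.mul_right S).trans (by rwa [one_mul])).add_right (c k)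

theorem Nat.sum_mul_pow_mod_mod_modEq {p r : ℕ} (hp : Odd p) (hp1 : 1 < p) (hr : 0 < r)
    (n : ℕ) : ∑ i ∈ range r, n * p ^ i % (p ^ r - 1) % p ≡ n [MOD 2] := by
  set Q := p ^ r - 1
  have hpr : p ≤ p ^ r := Nat.le_self_pow hr.ne' p
  have hQ1 : Q + 1 = p ^ r := by omega
  have hQpos : 0 < Q := by omega
  have h2Q : 2 ∣ Q := even_iff_two_dvd.mp (Nat.Odd.sub_odd hp.pow odd_one)
  set ν : ℕ → ℕ := fun i => n * p ^ i % Q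
  set c : ℕ → ℕ := fun i => p * ν i / Q
  have hrec : ∀ i, p * ν i = Q * c i + ν (i + 1) := fun i => by
    have hν : ν (i + 1) = p * ν i % Q := by
      simp only [ν, Nat.mul_mod_mod, pow_succ]
      ring_nf
    rw [hν]
    exact (Nat.div_add_mod _ _).symm
  -- `Q ≡ -1 (mod p)`, so the carry `c i` is the last base-`p` digit of `ν (i + 1)`.
  have hcarry : ∀ i, ν (i + 1) % p = c i := fun i => by
    have hc : c i < p := Nat.div_lt_of_lt_mul (by
      rw [mul_comm]; exact Nat.mul_lt_mul_of_pos_right (Nat.mod_lt _ hQpos) (by omega))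
    have hsum : ν (i + 1) + p * (p ^ (r - 1) * c i) = c i + p * ν i := by
      rw [← mul_assoc, mul_pow_sub_one hr.ne', ← hQ1, hrec]
      ring
    simpa [Nat.add_mul_mod_self_left, Nat.mod_eq_of_lt hc] using congrArg (· % p) hsum
  have hcyc : ν r = ν 0 := by simp [ν, ← hQ1, mul_add]
  have hsum : ∑ i ∈ range r, ν i % p = ∑ i ∈ range r, c i := by
    have h := sum_range_succ' (fun i => ν i % p) r
    rw [sum_range_succ, hcyc] at h
    simp only [hcarry] at h
    omega
  obtain ⟨S, hS, hSc⟩ := Nat.exists_pow_mul_eq_add_of_mul_eq hp hrec r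
  have hSν : S = ν 0 := by
    rw [hcyc, ← hQ1, add_mul, one_mul, add_left_inj] at hS
    exact (Nat.eq_of_mul_eq_mul_left hQpos hS).symm
  calc ∑ i ∈ range r, n * p ^ i % Q % p = ∑ i ∈ range r, c i := hsum
    _ ≡ S [MOD 2] := hSc.symm
    _ = n % Q := by simp [hSν, ν]
    _ ≡ n [MOD 2] := Nat.mod_mod_of_dvd n h2Q

theorem ZMod.neg_one_pow_val_sub_one {R : Type*} [Ring R] {n : ℕ} [Fact (1 < n)] (hn : Odd n)
    (b : ZMod n) : (-1 : R) ^ (b - 1).val = (if b = 0 then 1 else -1) * (-1) ^ b.val := by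
  by_cases hb : b = 0
  · have hev : Even (n - 1) := Nat.Odd.sub_odd hn odd_one
    simp [hb, ZMod.neg_val, ZMod.val_one, hev.neg_one_pow]
  · obtain ⟨k, hk⟩ :=
      Nat.exists_eq_add_of_le' (Nat.one_le_iff_ne_zero.mpr ((ZMod.val_ne_zero b).mpr hb))
    rw [ZMod.val_sub (by rw [ZMod.val_one, hk]; omega), ZMod.val_one, hk, Nat.add_sub_cancel,
      if_neg hb, pow_succ]
    simp

namespace PadicInt

variable {p : ℕ} [Fact p.Prime]

theorem toZMod_eq_of_norm_sub_lt_one {x y : ℤ_[p]} (h : ‖y - x‖ < 1) :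
    toZMod y = toZMod x := by
  rw [← sub_eq_zero, ← map_sub, ← RingHom.mem_ker, ker_toZMod, IsLocalRing.mem_maximalIdeal,
    mem_nonunits]
  exact h

theorem eq_of_eq_on_natCast {X : Type*} [TopologicalSpace X] [T2Space X] {f g : ℤ_[p] → X}
    (hf : Continuous f) (hg : Continuous g) {a : ZMod p}
    (h : ∀ n : ℕ, (n : ZMod p) = a → f n = g n) {x : ℤ_[p]} (hx : toZMod x = a) : f x = g x := by
  have hball : Set.EqOn f g (Metric.ball x 1 ∩ Set.range Nat.cast) := by
    rintro _ ⟨hy, n, rfl⟩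
    refine h n ?_
    rw [← hx, ← map_natCast toZMod n]
    exact toZMod_eq_of_norm_sub_lt_one (by simpa [dist_eq_norm] using hy)
  exact hball.closure hf hg (denseRange_natCast.open_subset_closure_inter Metric.isOpen_ball
    (Metric.mem_ball_self one_pos))

end PadicInt

section MoritaGamma

variable {p : ℕ} [Fact p.Prime] {G : ℤ_[p] → ℚ_[p]}

theorem moritaGamma_natCast_add_one
    (hG : ∀ n : ℕ, G n = (-1) ^ n * ∏ j ∈ (Ico 1 n).filter (fun j => ¬ p ∣ j), (j : ℚ_[p]))
    (n : ℕ) : G (n + 1) = if p ∣ n then -G n else -n * G n := by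
  rw [← Nat.cast_succ, hG, hG]
  rcases Nat.eq_zero_or_pos n with rfl | hn
  · simp
  · rw [prod_filter, prod_filter, prod_Ico_succ_top hn]
    by_cases hdvd : p ∣ n
    · simp only [hdvd, not_true, if_false, if_true, mul_one, pow_succ]
      ring
    · simp only [hdvd, not_false_iff, if_true, if_false, pow_succ]
      ring

theorem moritaGamma_add_one_of_toZMod_eq_zero (hcont : Continuous G)
    (hsucc : ∀ n : ℕ, G (n + 1) = if p ∣ n then -G n else -n * G n)
    {x : ℤ_[p]} (hx : toZMod x = 0) : G (x + 1) = -G x :=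
  eq_of_eq_on_natCast (hcont.comp (continuous_add_const 1)) hcont.neg
    (fun n hn => by simpa [(ZMod.natCast_eq_zero_iff n p).mp hn] using hsucc n) hx

theorem moritaGamma_add_one_of_toZMod_ne_zero (hcont : Continuous G)
    (hsucc : ∀ n : ℕ, G (n + 1) = if p ∣ n then -G n else -n * G n)
    {x : ℤ_[p]} (hx : toZMod x ≠ 0) : G (x + 1) = -x * G x :=
  eq_of_eq_on_natCast (g := fun y : ℤ_[p] => -(y : ℚ_[p]) * G y)
    (hcont.comp (continuous_add_const 1)) ((continuous_subtype_val.neg).mul hcont)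
    (fun n hn => by
      have hn' : ¬ p ∣ n := fun hdvd => hx (hn ▸ (ZMod.natCast_eq_zero_iff n p).mpr hdvd)
      simpa [hn'] using hsucc n) rfl

theorem moritaGamma_mul_one_sub (hp : Odd p) (hcont : Continuous G)
    (hsucc : ∀ n : ℕ, G (n + 1) = if p ∣ n then -G n else -n * G n) (hG0 : G 0 = 1)
    (x : ℤ_[p]) : G x * G (1 - x) = -(-1) ^ (toZMod (-x)).val := by
  have hstep : ∀ y : ℤ_[p], G (y + 1) * G (1 - (y + 1)) =
      (if toZMod y = 0 then 1 else -1) * (G y * G (1 - y)) := fun y => by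
    rw [show 1 - (y + 1) = -y by ring, show 1 - y = -y + 1 by ring]
    by_cases hy : toZMod y = 0
    · rw [if_pos hy, moritaGamma_add_one_of_toZMod_eq_zero hcont hsucc hy,
        moritaGamma_add_one_of_toZMod_eq_zero hcont hsucc (by rw [map_neg, hy, neg_zero])]
      ring
    · rw [if_neg hy, moritaGamma_add_one_of_toZMod_ne_zero hcont hsucc hy,
        moritaGamma_add_one_of_toZMod_ne_zero hcont hsucc (by rwa [map_neg, neg_ne_zero])]
      push_cast
      ring
  have hnat : ∀ n : ℕ, G n * G (1 - n) = -(-1) ^ (toZMod (-(n : ℤ_[p]))).val := by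
    intro n
    induction n with
    | zero =>
      have hG1 : G 1 = -1 := by simpa [hG0] using hsucc 0
      simp [hG0, hG1]
    | succ n ih =>
      rw [Nat.cast_succ, hstep, ih, neg_add, map_add, map_neg, map_neg,
        ← sub_eq_add_neg, map_one, ZMod.neg_one_pow_val_sub_one hp]
      simp only [neg_eq_zero]
      ring
  rw [map_neg]
  exact eq_of_eq_on_natCast (f := fun y => G y * G (1 - y))
    (g := fun _ => -(-1 : ℚ_[p]) ^ (-toZMod x).val)
    (hcont.mul (hcont.comp (continuous_const.sub continuous_id))) continuous_const
    (fun n hn => by rw [hnat, map_neg, map_natCast, hn]) rfl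

theorem moritaGamma_mul_of_add_eq (hp : Odd p) (hcont : Continuous G)
    (hsucc : ∀ n : ℕ, G (n + 1) = if p ∣ n then -G n else -n * G n) (hG0 : G 0 = 1)
    {Q : ℕ} (hQ : (Q : ZMod p) = -1) {u : ℤ_[p]} (hQu : (Q : ℤ_[p]) * u = 1) {a b : ℕ}
    (hab : a + b = Q) : G (a * u) * G (b * u) = -(-1) ^ (b % p) := by
  have hu : toZMod u = -1 :=
    neg_eq_iff_eq_neg.mp (by simpa [hQ] using congrArg toZMod hQu)
  have hau : (a : ℤ_[p]) * u = 1 - b * u := by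
    rw [← hQu, ← hab]
    push_cast
    ring
  rw [hau, mul_comm, moritaGamma_mul_one_sub hp hcont hsucc hG0, map_neg, map_mul, hu,
    map_natCast, mul_neg_one, neg_neg, ZMod.val_natCast]

end MoritaGamma

/-- For `0 ≤ m ≤ q-2` with `m ≠ (q-1)/2`,
`∏_{i=0}^{r-1} Γ_p(⟨(1/2 - m/(q-1))p^i⟩) Γ_p(⟨(1/2 + m/(q-1))p^i⟩) / Γ_p(⟨p^i/2⟩)^2
= ω̄^m(-1)`.  Here `G : ℤ_p → ℚ_p` is Morita's `p`-adic gamma function, the fractional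
parts are written as `(k mod (q-1))/(q-1)` inside `ℤ_p` (note `1/2 = ((q-1)/2)/(q-1)`),
and `w = ω̄(-1)` is the `(q-1)`-th root of unity congruent to `-1` mod `p`. -/
theorem stmt12 (p r q : ℕ) [hpf : Fact p.Prime] (hodd : Odd p) (hr : 0 < r)
    (hq : q = p ^ r)
    (G : ℤ_[p] → ℚ_[p]) (hcont : Continuous G)
    (hG : ∀ n : ℕ, G n = (-1) ^ n *
      ∏ j ∈ (Finset.Ico 1 n).filter (fun j => ¬ p ∣ j), (j : ℚ_[p]))
    (m : ℕ) (hm2 : m ≤ q - 2) (hm3 : m ≠ (q - 1) / 2)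
    (w : ℚ_[p]) (hw1 : w ^ (q - 1) = 1) (hw2 : ‖w + 1‖ < 1) :
    ∏ i ∈ Finset.range r,
        (G (((((q - 1) / 2 + (q - 1) - m) * p ^ i) % (q - 1) : ℕ) *
              Ring.inverse ((q - 1 : ℕ) : ℤ_[p])) *
            G (((((q - 1) / 2 + m) * p ^ i) % (q - 1) : ℕ) *
              Ring.inverse ((q - 1 : ℕ) : ℤ_[p]))) /
          (G ((((q - 1) / 2 * p ^ i) % (q - 1) : ℕ) *
              Ring.inverse ((q - 1 : ℕ) : ℤ_[p])) *
            G ((((q - 1) / 2 * p ^ i) % (q - 1) : ℕ) *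
              Ring.inverse ((q - 1 : ℕ) : ℤ_[p]))) =
      w ^ m := by
  subst hq
  set Q := p ^ r - 1
  have hpr : p ≤ p ^ r := Nat.le_self_pow hr.ne' p
  have hQ2 : Even Q := Nat.Odd.sub_odd hodd.pow odd_one
  have hcop : p.Coprime Q := ((Nat.coprime_self_sub_left (by omega)).mpr
    (Nat.coprime_one_left _)).symm.coprime_dvd_left (dvd_pow_self p hr.ne')
  have hw : w = -1 := neg_eq_iff_eq_neg.mp <| eq_one_of_pow_eq_one_of_norm_sub_one_lt
    (by rwa [hQ2.neg_pow]) (by rwa [← neg_add', norm_neg])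
    (Padic.norm_natCast_eq_one_iff.mpr hcop)
  have hQ : (Q : ZMod p) = -1 := by
    rw [Nat.cast_sub (by omega), Nat.cast_pow, ZMod.natCast_self, zero_pow hr.ne', zero_sub,
      Nat.cast_one]
  have hQu : (Q : ℤ_[p]) * Ring.inverse (Q : ℤ_[p]) = 1 := Ring.mul_inverse_cancel _
    (PadicInt.isUnit_iff.mpr (PadicInt.norm_natCast_eq_one_iff.mpr hcop))
  have hpair {a b : ℕ} (hab : a + b = Q) := moritaGamma_mul_of_add_eq hodd hcont
    (moritaGamma_natCast_add_one hG) (by simpa using hG 0) hQ hQu hab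
  have hhalf : Q / 2 + Q / 2 = Q := by obtain ⟨t, ht⟩ := hQ2; omega
  have hnum : ¬ Q ∣ Q / 2 + m := fun h =>
    hm3 (by have := Nat.eq_of_dvd_of_lt_two_mul (by omega) h (by omega); omega)
  have hden : ¬ Q ∣ Q / 2 := fun h => by have := Nat.le_of_dvd (by omega) h; omega
  rw [prod_congr rfl fun i _ => by
    rw [hpair (Nat.mul_mod_add_mul_mod_eq (hcop.symm.pow_right i) ⟨2, by omega⟩ hnum),
      hpair (Nat.mul_mod_add_mul_mod_eq (hcop.symm.pow_right i) ⟨1, by omega⟩ hden),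
      neg_div_neg_eq],
    prod_div_distrib, prod_pow_eq_pow_sum, prod_pow_eq_pow_sum,
    (Nat.sum_mul_pow_mod_mod_modEq hodd hpf.out.one_lt hr _).neg_one_pow_eq,
    (Nat.sum_mul_pow_mod_mod_modEq hodd hpf.out.one_lt hr _).neg_one_pow_eq, pow_add, hw,
    mul_div_cancel_left₀ _ (by simp)]
end

section
/- Let p ≥ 5 be prime and q = p^r. For a ∈ F_q^×, the number of distinct roots in F_q of the polynomial x^4 − (a^3/2)x + 3a^4/16 equals 2 + φ(−2), where φ is the quadratic character of F_q. -/
/-!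
Over a field with `2 ≠ 0` the quartic factors as
`16 f(x) = (2x - a)² ((2x + a)² + 2a²)`. The double root `a/2` is not a root of the
second factor because `6a² ≠ 0`, and the roots of the second factor correspond, through
the affine bijection `x ↦ 2x + a`, to the square roots of `-2a²`, of which there are
`1 + φ(-2a²) = 1 + φ(-2)`.
-/

open Finset

section QuarticRoots

variable {F : Type*} [Field F]

theorem quartic_eq_zero_iff (h2 : (2 : F) ≠ 0) {a x : F} :
    x ^ 4 - a ^ 3 / 2 * x + 3 * a ^ 4 / 16 = 0 ↔ x = a / 2 ∨ (2 * x + a) ^ 2 = -2 * a ^ 2 := by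
  have h16 : (16 : F) ≠ 0 := by
    rw [show (16 : F) = 2 ^ 4 by norm_num]
    exact pow_ne_zero 4 h2
  have hfactor : 16 * (x ^ 4 - a ^ 3 / 2 * x + 3 * a ^ 4 / 16) =
      (2 * x - a) ^ 2 * ((2 * x + a) ^ 2 + 2 * a ^ 2) := by
    field_simp
    ring
  rw [← mul_right_inj' h16, mul_zero, hfactor, mul_eq_zero, sq_eq_zero_iff,
    sub_eq_zero, eq_div_iff h2, mul_comm, add_eq_zero_iff_eq_neg, neg_mul]

variable [Fintype F] [DecidableEq F]

theorem card_filter_affine_sq_eq {u : F} (hu : u ≠ 0) (b c : F) :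
    #{x | (u * x + b) ^ 2 = c} = #{y : F | y ^ 2 = c} :=
  card_equiv ((Equiv.mulLeft₀ u hu).trans (Equiv.addRight b)) (by simp)

theorem card_roots_quartic (hF : ringChar F ≠ 2) (h3 : (3 : F) ≠ 0) {a : F} (ha : a ≠ 0) :
    (#{x | x ^ 4 - a ^ 3 / 2 * x + 3 * a ^ 4 / 16 = 0} : ℤ) = 2 + quadraticChar F (-2) := by
  have h2 : (2 : F) ≠ 0 := Ring.two_ne_zero hF
  have hroots : ({x | x ^ 4 - a ^ 3 / 2 * x + 3 * a ^ 4 / 16 = 0} : Finset F) =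
      insert (a / 2) ({x | (2 * x + a) ^ 2 = -2 * a ^ 2} : Finset F) := by
    ext x
    simp [quartic_eq_zero_iff h2]
  have hsimple : a / 2 ∉ ({x | (2 * x + a) ^ 2 = -2 * a ^ 2} : Finset F) := by
    have h6 : (6 : F) * a ^ 2 ≠ 0 := by
      rw [show (6 : F) = 2 * 3 by norm_num]
      exact mul_ne_zero (mul_ne_zero h2 h3) (pow_ne_zero 2 ha)
    simp only [mem_filter, mem_univ, true_and]
    contrapose! h6
    rw [mul_div_cancel₀ a h2] at h6
    linear_combination h6
  rw [hroots, card_insert_of_notMem hsimple, card_filter_affine_sq_eq h2, ← Set.toFinset_ofPred,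
    Nat.cast_add, quadraticChar_card_sqrts hF, map_mul, quadraticChar_sq_one' ha]
  ring

end QuarticRoots

theorem stmt15_general (p r : ℕ) (hp : p.Prime) (hp5 : 5 ≤ p)
    (F : Type) [Field F] [Fintype F] [DecidableEq F] (hcard : Fintype.card F = p ^ r)
    (a : F) (ha : a ≠ 0) :
    ((Finset.univ.filter fun x : F =>
        x ^ 4 - a ^ 3 / 2 * x + 3 * a ^ 4 / 16 = 0).card : ℤ) =
      2 + quadraticChar F (-2) := by
  have := Fact.mk hp
  have := charP_of_card_eq_prime_pow (R := F) hcard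
  have hF : ringChar F ≠ 2 := by rw [ringChar.eq F p]; omega
  have h3 : ((3 : ℕ) : F) ≠ 0 := CharP.cast_ne_zero_of_ne_of_prime F Nat.prime_three (by omega)
  exact card_roots_quartic hF (by exact_mod_cast h3) ha

/-- For `p ≥ 5`, `q = p^r` and `a ∈ F_q^×`, the number of distinct roots in `F_q` of
`x^4 - (a^3/2) x + 3a^4/16` is `2 + φ(-2)`, where `φ` is the quadratic character. -/
theorem stmt15 (p r : ℕ) (hp : p.Prime) (hp5 : 5 ≤ p) (hr : 0 < r)
    (F : Type) [Field F] [Fintype F] [DecidableEq F] (hcard : Fintype.card F = p ^ r)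
    (a : F) (ha : a ≠ 0) :
    ((Finset.univ.filter fun x : F =>
        x ^ 4 - a ^ 3 / 2 * x + 3 * a ^ 4 / 16 = 0).card : ℤ) =
      2 + quadraticChar F (-2) :=
  stmt15_general p r hp hp5 F hcard a ha
end

section
/- Let q = p^r with p > 3 prime, and let k = 2 with q ≡ 1 (mod 2). For any multiplicative character ψ of F_q and χ ranging over characters with χ^2 = ε, the Davenport–Hasse relation gives G(ψ)·G(φψ) = G(ψ^2)·ψ(4^{-1})·G(φ)·G(ε)·(−1), i.e., G(φψ) = G(φ)·G(ψ^2)·ψ(4^{−1})/G(ψ) whenever G(ψ) ≠ 0; in particular, for T a generator and any m, G_{−m + (q−1)/2} = G_{(q−1)/2}·G_{−2m}·T^m(4)/G_{−m}. -/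
/-!
For `ψ² ≠ 1`, `G(ψ)² = G(ψ²) J(ψ, ψ)`, and the substitution `x = (1 + t)/2` turns
`J(ψ, ψ) = ∑ ψ(x) ψ(1 - x)` into `ψ(4⁻¹) ∑ ψ(1 - t²)`. Counting the square roots of `u` by
`1 + φ(u)` rewrites this as `ψ(4⁻¹) J(φ, ψ) = ψ(4⁻¹) G(φ) G(ψ) / G(φψ)`. The remaining cases
`ψ = ε` and `ψ = φ` are immediate, and `G(ε) = -1`. For a generator `T`, `T^((q-1)/2)` has
order exactly `2`, so it is `φ`, the only character of order `2`.
-/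

open Finset

lemma MulChar.apply_generator_eq_neg_one {M R : Type*} [CommMonoid M] [CommRing R]
    [NoZeroDivisors R] {g : Mˣ} (hg : ∀ x, x ∈ Subgroup.zpowers g) {χ : MulChar M R}
    (hχ₁ : χ ≠ 1) (hχ₂ : χ ^ 2 = 1) : χ g = -1 := by
  have hsq : χ g ^ 2 = 1 := by
    rw [← MulChar.pow_apply' χ two_ne_zero, hχ₂, MulChar.one_apply_coe]
  refine (sq_eq_one_iff.mp hsq).resolve_left fun h ↦ hχ₁ ?_
  rwa [MulChar.eq_iff hg, MulChar.one_apply_coe]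

section QuadraticChar

variable {F : Type*} [Field F] [Fintype F] {R : Type*} [CommRing R]

lemma jacobiSum_self_eq_sum_one_sub_sq (hF : ringChar F ≠ 2) (ψ : MulChar F R) :
    jacobiSum ψ ψ = ψ (4⁻¹ : F) * ∑ t, ψ (1 - t ^ 2) := by
  have h2 : (2 : F) ≠ 0 := Ring.two_ne_zero hF
  have h4 : (4 : F) ≠ 0 := by simpa [show (4 : F) = 2 ^ 2 by norm_num] using h2
  rw [jacobiSum, mul_sum, ← Equiv.sum_comp
    ((Equiv.addLeft (1 : F)).trans (Equiv.mulLeft₀ (2⁻¹ : F) (inv_ne_zero h2)))]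
  refine sum_congr rfl fun t _ ↦ ?_
  simp only [Equiv.trans_apply, Equiv.coe_addLeft, Equiv.mulLeft₀_apply, ← map_mul]
  congr 1
  field_simp
  ring

variable [DecidableEq F]

lemma MulChar.eq_quadraticChar_of_sq_eq_one [NoZeroDivisors R] (hF : ringChar F ≠ 2)
    {χ : MulChar F R} (hχ₁ : χ ≠ 1) (hχ₂ : χ ^ 2 = 1) :
    χ = (quadraticChar F).ringHomComp (Int.castRingHom R) := by
  obtain ⟨g, hg⟩ := IsCyclic.exists_generator (α := Fˣ)
  rw [MulChar.eq_iff hg, MulChar.ringHomComp_apply, apply_generator_eq_neg_one hg hχ₁ hχ₂,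
    apply_generator_eq_neg_one hg (quadraticChar_ne_one hF)
      (quadraticChar_isQuadratic F).sq_eq_one]
  simp

lemma sum_comp_sq_eq_sum_quadraticChar_add_one (hF : ringChar F ≠ 2) (f : F → R) :
    ∑ t, f (t ^ 2) = ∑ u, ((quadraticChar F u : R) + 1) * f u := by
  rw [← Finset.sum_fiberwise' univ (· ^ 2) f]
  refine sum_congr rfl fun u _ ↦ ?_
  have hcard := quadraticChar_card_sqrts hF u
  rw [Set.toFinset_ofPred] at hcard
  rw [sum_const, nsmul_eq_mul]
  exact_mod_cast congrArg (fun n : ℤ ↦ (n : R) * f u) hcard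

lemma jacobiSum_self_eq_jacobiSum_quadraticChar [IsDomain R] (hF : ringChar F ≠ 2)
    {ψ : MulChar F R} (hψ : ψ ≠ 1) :
    jacobiSum ψ ψ =
      ψ (4⁻¹ : F) * jacobiSum ((quadraticChar F).ringHomComp (Int.castRingHom R)) ψ := by
  have hshift : ∑ u : F, ψ (1 - u) = 0 :=
    (Equiv.sum_comp (Equiv.subLeft 1) ψ).trans (MulChar.sum_eq_zero_of_ne_one hψ)
  rw [jacobiSum_self_eq_sum_one_sub_sq hF, sum_comp_sq_eq_sum_quadraticChar_add_one hF
    (fun u ↦ ψ (1 - u))]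
  simp only [add_mul, one_mul, sum_add_distrib, hshift, add_zero]
  rfl

end QuadraticChar

lemma AddChar.IsPrimitive.ne_one {A M : Type*} [CommRing A] [Nontrivial A] [CommMonoid M]
    {ψ : AddChar A M} (hψ : ψ.IsPrimitive) : ψ ≠ 1 := by
  simpa using hψ one_ne_zero

section GaussSum

variable {F : Type*} [Field F] [Fintype F] {R : Type*} [CommRing R] [IsDomain R]

lemma gaussSum_ne_zero_of_isPrimitive (hR : (Fintype.card F : R) ≠ 0) {θ : AddChar F R}
    (hθ : θ.IsPrimitive) (χ : MulChar F R) : gaussSum χ θ ≠ 0 := by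
  by_cases hχ : χ = 1
  · rw [hχ, gaussSum_one_left hθ.ne_one]
    exact neg_ne_zero.mpr one_ne_zero
  · exact gaussSum_ne_zero_of_nontrivial hR hχ hθ

variable [DecidableEq F]

theorem gaussSum_mul_gaussSum_quadraticChar_mul (hF : ringChar F ≠ 2)
    (hR : (Fintype.card F : R) ≠ 0) {θ : AddChar F R} (hθ : θ.IsPrimitive) (ψ : MulChar F R) :
    gaussSum ψ θ * gaussSum ((quadraticChar F).ringHomComp (Int.castRingHom R) * ψ) θ =
      gaussSum (ψ ^ 2) θ * ψ (4⁻¹ : F) *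
        gaussSum ((quadraticChar F).ringHomComp (Int.castRingHom R)) θ := by
  set φ := (quadraticChar F).ringHomComp (Int.castRingHom R)
  have hφφ : φ * φ = 1 := by
    rw [← sq]
    exact ((quadraticChar_isQuadratic F).comp _).sq_eq_one
  by_cases hψ₁ : ψ = 1
  · have h4 : IsUnit (4⁻¹ : F) := by
      simpa [show (4 : F) = 2 ^ 2 by norm_num] using Ring.two_ne_zero hF
    rw [hψ₁, mul_one, one_pow, MulChar.one_apply h4, mul_one, mul_comm]
  by_cases hψφ : ψ = φ
  · have hφ4 : φ (4⁻¹ : F) = 1 := by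
      rw [MulChar.ringHomComp_apply, show (4⁻¹ : F) = 2⁻¹ ^ 2 by norm_num,
        quadraticChar_sq_one' (inv_ne_zero (Ring.two_ne_zero hF)), map_one]
    rw [hψφ, hφφ, sq, hφφ, hφ4, mul_one, mul_comm]
  have hψψ : ψ * ψ ≠ 1 := fun h ↦
    hψφ (MulChar.eq_quadraticChar_of_sq_eq_one hF hψ₁ (by rwa [sq]))
  have hφψ : φ * ψ ≠ 1 := fun h ↦ hψφ (by rw [← one_mul ψ, ← hφφ, mul_assoc, h, mul_one])
  refine mul_left_cancel₀ (gaussSum_ne_zero_of_nontrivial hR hψ₁ hθ) ?_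
  calc gaussSum ψ θ * (gaussSum ψ θ * gaussSum (φ * ψ) θ)
      = gaussSum (ψ * ψ) θ * jacobiSum ψ ψ * gaussSum (φ * ψ) θ := by
        rw [jacobiSum_mul_nontrivial hψψ]; ring
    _ = gaussSum (ψ * ψ) θ * ψ (4⁻¹ : F) * (gaussSum (φ * ψ) θ * jacobiSum φ ψ) := by
        rw [jacobiSum_self_eq_jacobiSum_quadraticChar hF hψ₁]; ring
    _ = gaussSum ψ θ * (gaussSum (ψ ^ 2) θ * ψ (4⁻¹ : F) * gaussSum φ θ) := by
        rw [jacobiSum_mul_nontrivial hφψ, sq]; ring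

end GaussSum

section TraceChar

variable {p : ℕ} {F : Type*} [Field F] [Algebra (ZMod p) F] {R : Type*} [CommMonoid R]

noncomputable def traceAddChar [NeZero p] {ζ : R} (hζ : ζ ^ p = 1) : AddChar F R :=
  (AddChar.zmodChar p hζ).compAddMonoidHom (Algebra.trace (ZMod p) F).toAddMonoidHom

lemma traceAddChar_apply [NeZero p] {ζ : R} (hζ : ζ ^ p = 1) (x : F) :
    traceAddChar hζ x = ζ ^ (Algebra.trace (ZMod p) F x).val :=
  rfl

lemma isPrimitive_traceAddChar [Fact p.Prime] [Finite F] {ζ : R} (hζ : IsPrimitiveRoot ζ p) :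
    (traceAddChar hζ.pow_eq_one : AddChar F R).IsPrimitive := by
  refine AddChar.IsPrimitive.of_ne_one fun h ↦ ?_
  obtain ⟨x, hx⟩ := DFunLike.ne_iff.mp (Algebra.trace_ne_zero (ZMod p) F)
  have hval : (Algebra.trace (ZMod p) F x).val ≠ 0 := by simpa [ZMod.val_eq_zero] using hx
  refine hζ.pow_ne_one_of_pos_of_lt hval (ZMod.val_lt _) ?_
  rw [← traceAddChar_apply hζ.pow_eq_one, h, AddChar.one_apply]

end TraceChar

lemma MulChar.zpow_card_sub_one_div_two_eq_quadraticChar {F : Type*} [Field F] [Fintype F]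
    [DecidableEq F] {R : Type*} [CommRing R] [IsDomain R]
    [HasEnoughRootsOfUnity R (Monoid.exponent Fˣ)] (hF : ringChar F ≠ 2) {T : MulChar F R}
    (hT : ∀ χ, χ ∈ Subgroup.zpowers T) :
    T ^ (((Fintype.card F : ℤ) - 1) / 2) = (quadraticChar F).ringHomComp (Int.castRingHom R) := by
  have hodd := FiniteField.odd_card_of_char_ne_two hF
  have htwo : 1 < Fintype.card F := Fintype.one_lt_card
  have horder : orderOf T = Fintype.card F - 1 := by
    rw [orderOf_eq_card_of_forall_mem_zpowers hT, card_eq_card_units_of_hasEnoughRootsOfUnity,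
      Nat.card_eq_fintype_card, Fintype.card_units]
  rw [show ((Fintype.card F : ℤ) - 1) / 2 = ((Fintype.card F - 1) / 2 : ℕ) by omega,
    zpow_natCast]
  refine eq_quadraticChar_of_sq_eq_one hF (pow_ne_one_of_lt_orderOf (by omega) (by omega)) ?_
  rw [← pow_mul, show (Fintype.card F - 1) / 2 * 2 = orderOf T by omega, pow_orderOf_eq_one]

theorem stmt19_general (p : ℕ) (hp : p.Prime) (hp3 : 3 < p)
    (F : Type) [Field F] [Fintype F] [DecidableEq F] [Algebra (ZMod p) F]
    (ζ : ℂ) (hζ : IsPrimitiveRoot ζ p)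
    (Gs : MulChar F ℂ → ℂ)
    (hGs : ∀ χ : MulChar F ℂ,
      Gs χ = ∑ x : F, χ x * ζ ^ (Algebra.trace (ZMod p) F x).val)
    (φC : MulChar F ℂ) (hφ : φC = (quadraticChar F).ringHomComp (Int.castRingHom ℂ)) :
    (∀ ψ : MulChar F ℂ,
        Gs ψ * Gs (φC * ψ) = Gs (ψ ^ 2) * ψ (4⁻¹ : F) * Gs φC * Gs 1 * (-1)) ∧
      (∀ ψ : MulChar F ℂ, Gs ψ ≠ 0 →
        Gs (φC * ψ) = Gs φC * Gs (ψ ^ 2) * ψ (4⁻¹ : F) / Gs ψ) ∧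
      ∀ T : MulChar F ℂ, (∀ χ : MulChar F ℂ, ∃ n : ℕ, χ = T ^ n) → ∀ m : ℤ,
        Gs (T ^ (-m + ((Fintype.card F : ℤ) - 1) / 2)) =
          Gs (T ^ (((Fintype.card F : ℤ) - 1) / 2)) * Gs (T ^ (-2 * m)) * (T ^ m) 4 /
            Gs (T ^ (-m)) := by
  have : Fact p.Prime := ⟨hp⟩
  have : CharP F p := charP_of_injective_algebraMap' (ZMod p) p
  have hF : ringChar F ≠ 2 := by rw [ringChar.eq F p]; omega
  have hcard : (Fintype.card F : ℂ) ≠ 0 := Nat.cast_ne_zero.mpr Fintype.card_ne_zero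
  set θ : AddChar F ℂ := traceAddChar hζ.pow_eq_one
  have hθ : θ.IsPrimitive := isPrimitive_traceAddChar hζ
  have hGθ : ∀ χ, Gs χ = gaussSum χ θ := fun χ ↦ hGs χ
  simp only [hGθ]
  have hmul : ∀ ψ : MulChar F ℂ, gaussSum ψ θ * gaussSum (φC * ψ) θ =
      gaussSum (ψ ^ 2) θ * ψ (4⁻¹ : F) * gaussSum φC θ := by
    rw [hφ]
    exact gaussSum_mul_gaussSum_quadraticChar_mul hF hcard hθ
  have hdiv : ∀ ψ : MulChar F ℂ, gaussSum ψ θ ≠ 0 →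
      gaussSum (φC * ψ) θ = gaussSum φC θ * gaussSum (ψ ^ 2) θ * ψ (4⁻¹ : F) / gaussSum ψ θ :=
    fun ψ hψ ↦ by rw [eq_div_iff hψ]; linear_combination hmul ψ
  refine ⟨fun ψ ↦ by rw [hmul, gaussSum_one_left hθ.ne_one]; ring, hdiv, fun T hT m ↦ ?_⟩
  have hT' : ∀ χ, χ ∈ Subgroup.zpowers T := fun χ ↦
    (hT χ).elim fun n hn ↦ hn ▸ pow_mem (Subgroup.mem_zpowers T) n
  have hTφ : T ^ (((Fintype.card F : ℤ) - 1) / 2) = φC := by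
    rw [hφ, MulChar.zpow_card_sub_one_div_two_eq_quadraticChar hF hT']
  rw [zpow_add, hTφ, mul_comm, hdiv _ (gaussSum_ne_zero_of_isPrimitive hcard hθ _)]
  have hsq : (T ^ (-m)) ^ 2 = T ^ (-2 * m) := by
    rw [← zpow_natCast, ← zpow_mul]
    ring_nf
  have h4 : (T ^ (-m)) (4⁻¹ : F) = (T ^ m) 4 := by
    rw [zpow_neg, MulChar.inv_apply', inv_inv]
  rw [hsq, h4]

/-- The `k = 2` case of the Davenport–Hasse relation for Gauss sums `Gs χ = G(χ)` over
`F_q` (with `θ(α) = ζ_p^{tr α}` and `φ` the quadratic character):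
`G(ψ) G(φψ) = G(ψ^2) ψ(4⁻¹) G(φ) G(ε) (-1)`, hence
`G(φψ) = G(φ) G(ψ^2) ψ(4⁻¹) / G(ψ)` when `G(ψ) ≠ 0`; in particular, for a generator `T`
of the character group and any `m`,
`G_{-m+(q-1)/2} = G_{(q-1)/2} G_{-2m} T^m(4) / G_{-m}`. -/
theorem stmt19 (p r : ℕ) (hp : p.Prime) (hp3 : 3 < p) (hr : 0 < r)
    (F : Type) [Field F] [Fintype F] [DecidableEq F] [Algebra (ZMod p) F]
    (hcard : Fintype.card F = p ^ r)
    (ζ : ℂ) (hζ : IsPrimitiveRoot ζ p)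
    (Gs : MulChar F ℂ → ℂ)
    (hGs : ∀ χ : MulChar F ℂ,
      Gs χ = ∑ x : F, χ x * ζ ^ (Algebra.trace (ZMod p) F x).val)
    (φC : MulChar F ℂ) (hφ : φC = (quadraticChar F).ringHomComp (Int.castRingHom ℂ)) :
    (∀ ψ : MulChar F ℂ,
        Gs ψ * Gs (φC * ψ) = Gs (ψ ^ 2) * ψ (4⁻¹ : F) * Gs φC * Gs 1 * (-1)) ∧
      (∀ ψ : MulChar F ℂ, Gs ψ ≠ 0 →
        Gs (φC * ψ) = Gs φC * Gs (ψ ^ 2) * ψ (4⁻¹ : F) / Gs ψ) ∧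
      ∀ T : MulChar F ℂ, (∀ χ : MulChar F ℂ, ∃ n : ℕ, χ = T ^ n) → ∀ m : ℤ,
        Gs (T ^ (-m + ((Fintype.card F : ℤ) - 1) / 2)) =
          Gs (T ^ (((Fintype.card F : ℤ) - 1) / 2)) * Gs (T ^ (-2 * m)) * (T ^ m) 4 /
            Gs (T ^ (-m)) :=
  stmt19_general p hp hp3 F ζ hζ Gs hGs φC hφ
end
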